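/- Let X ⊆ ℝⁿ (n ≥ 2) be open, Φ ∈ C⁰(X, ℝ), Φ̄ ∈ C¹(X, ℝ) with ∇Φ̄(x) ≠ 0 for all x ∈ X. Let K ⊆ X be nonempty compact with connected boundary ∂K, let [a, b] ⊆ Φ̄(K) be a nondegenerate interval, and suppose sup_{x∈K} |Φ(x) − Φ̄(x)| ≤ μ < (b − a)/2. Then for every c ∈ (a + μ, b − μ), the level set {x : Φ(x) = c} intersects ∂K. -/
import Mathlib

/-- The "tunnel effect": let `Φ` be continuous and `Φ̄` be `C¹` without critical points on
an open `X ⊆ ℝⁿ` (`n ≥ 2`), `K ⊆ X` nonempty compact with connected boundary,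
`[a,b] ⊆ Φ̄(K)` a nondegenerate interval, and `sup_{x ∈ K} |Φ x - Φ̄ x| ≤ μ < (b-a)/2`.
Then for every `c ∈ (a+μ, b-μ)` the level set `{Φ = c}` intersects `∂K`. -/
theorem tunnel_effect
    {n : ℕ} (hn : 2 ≤ n)
    (X : Set (EuclideanSpace ℝ (Fin n))) (hXopen : IsOpen X)
    (Φ Φb : EuclideanSpace ℝ (Fin n) → ℝ)
    (hΦ : ContinuousOn Φ X)
    (hΦb : ContDiffOn ℝ 1 Φb X)
    (hgrad : ∀ x ∈ X, gradient Φb x ≠ 0)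
    (K : Set (EuclideanSpace ℝ (Fin n))) (hK : IsCompact K) (hKne : K.Nonempty)
    (hKX : K ⊆ X) (hbd : IsConnected (frontier K))
    (a b : ℝ) (hab : a < b) (hIm : Set.Icc a b ⊆ Φb '' K)
    (μ : ℝ) (hμ : ∀ x ∈ K, |Φ x - Φb x| ≤ μ) (hμsmall : μ < (b - a) / 2) :
    ∀ c, a + μ < c → c < b - μ → ∃ x ∈ frontier K, Φ x = c := by
  intro c hca hcb
  have hKclosed : IsClosed K := hK.isClosed
  have hfrK : frontier K ⊆ K := by
    rw [frontier_eq_closure_inter_closure, hKclosed.closure_eq]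
    exact Set.inter_subset_left
  -- no interior extremum
  have hnotint : ∀ x ∈ K, (IsMinOn Φb K x ∨ IsMaxOn Φb K x) → x ∈ frontier K := by
    intro x hx hext
    by_contra hfr
    have hxi : x ∈ interior K := by
      by_contra hxi
      exact hfr (hKclosed.frontier_eq ▸ Set.mem_diff_of_mem hx hxi)
    have hxX : x ∈ X := hKX hx
    have hnhds : interior K ∈ nhds x := isOpen_interior.mem_nhds hxi
    have hloc : IsLocalExtr Φb x := by
      rcases hext with hmin | hmax
      · exact Or.inl (Filter.eventually_of_mem hnhds fun y hy => hmin (interior_subset hy))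
      · exact Or.inr (Filter.eventually_of_mem hnhds fun y hy => hmax (interior_subset hy))
    have hfd : fderiv ℝ Φb x = 0 := hloc.fderiv_eq_zero
    have : gradient Φb x = 0 := by
      rw [gradient, hfd]; simp
    exact hgrad x hxX this
  -- min and max of Φb on K
  have hΦbK : ContinuousOn Φb K := (hΦb.continuousOn).mono hKX
  obtain ⟨xm, hxmK, hxmin⟩ := hK.exists_isMinOn hKne hΦbK
  obtain ⟨xM, hxMK, hxmax⟩ := hK.exists_isMaxOn hKne hΦbK
  have hxmF : xm ∈ frontier K := hnotint xm hxmK (Or.inl hxmin)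
  have hxMF : xM ∈ frontier K := hnotint xM hxMK (Or.inr hxmax)
  -- Φb xm ≤ a and b ≤ Φb xM
  obtain ⟨ya, hyaK, hya⟩ := hIm ⟨le_refl a, hab.le⟩
  obtain ⟨yb, hybK, hyb⟩ := hIm ⟨hab.le, le_refl b⟩
  have hma : Φb xm ≤ a := hya ▸ hxmin hyaK
  have hMb : b ≤ Φb xM := hyb ▸ hxmax hybK
  -- Φ xm ≤ c ≤ Φ xM
  have h1 : Φ xm ≤ c := by
    have := (abs_le.mp (hμ xm hxmK)).2
    linarith
  have h2 : c ≤ Φ xM := by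
    have := (abs_le.mp (hμ xM hxMK)).1
    linarith
  have hΦfr : ContinuousOn Φ (frontier K) := hΦ.mono (hfrK.trans hKX)
  have := hbd.isPreconnected.intermediate_value hxmF hxMF hΦfr ⟨h1, h2⟩
  obtain ⟨x, hxF, hx⟩ := this
  exact ⟨x, hxF, hx⟩
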